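/- arXiv:1904.05573 — 4 statements merged into one kernel-verified Lean document; each statement's English description precedes it below -/
import Mathlib

section
/- Fix integers k, K ≥ 1 and let w be a permutation of {1,...,K} lying in the subgroup of S_K generated by all (k+1)-cycles. Then w is 1 mod k if and only if k·ℓ_k(w) = K − cyc(w). -/
/-- `t` is a `(k+1)`-cycle: a single cycle whose support has exactly `k+1` elements. -/
def IsKCycle (k : ℕ) {N : ℕ} (t : Equiv.Perm (Fin N)) : Prop :=
  t.IsCycle ∧ t.support.card = k + 1

/-- `ellK k w` is the minimum number of `(k+1)`-cycles whose product is `w`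
(`0` for the identity, via the empty list). -/
noncomputable def ellK (k : ℕ) {N : ℕ} (w : Equiv.Perm (Fin N)) : ℕ :=
  sInf {m | ∃ l : List (Equiv.Perm (Fin N)),
    l.length = m ∧ (∀ t ∈ l, IsKCycle k t) ∧ l.prod = w}

/-- the `k`-absolute order: `u ≤_k w` iff `ℓ_k(u) + ℓ_k(u⁻¹w) = ℓ_k(w)`. -/
def absLe (k : ℕ) {N : ℕ} (u w : Equiv.Perm (Fin N)) : Prop :=
  ellK k u + ellK k (u⁻¹ * w) = ellK k w

/-- the subgroup of the symmetric group generated by all `(k+1)`-cycles. -/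
def kGenSubgroup (k N : ℕ) : Subgroup (Equiv.Perm (Fin N)) :=
  Subgroup.closure {t | IsKCycle k t}

/-- a permutation is `1 mod k` if all its cycle lengths are congruent to `1` mod `k`
(fixed points, of length `1`, satisfy this automatically). -/
def IsOneModK (k : ℕ) {N : ℕ} (w : Equiv.Perm (Fin N)) : Prop :=
  ∀ l ∈ w.cycleType, l % k = 1 % k

/-- the number of cycles of `w`, counting fixed points as cycles of length 1. -/
def cyc {N : ℕ} (w : Equiv.Perm (Fin N)) : ℕ :=
  w.cycleType.card + (N - w.support.card)

/-- extend a tuple `(u_1, ..., u_q)` by `u_0 = 1` and `u_i = c` for `i > q`. -/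
def chainExt {G : Type*} [One G] (q : ℕ) (c : G) (u : Fin q → G) (i : ℕ) : G :=
  if _h0 : i = 0 then 1 else if h : i ≤ q then u ⟨i - 1, by omega⟩ else c

/-- `(u_1, ..., u_q)` is a `q`-multichain: `u_1 ≤_k u_2 ≤_k ⋯ ≤_k u_q ≤_k c`. -/
def IsMultichainTo (k : ℕ) {N : ℕ} (q : ℕ) (c : Equiv.Perm (Fin N))
    (u : Fin q → Equiv.Perm (Fin N)) : Prop :=
  ∀ i : ℕ, 1 ≤ i → i ≤ q → absLe k (chainExt q c u i) (chainExt q c u (i + 1))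

/-!
Let `N(w) = K - cyc(w)`. Right-multiplying by a transposition `(a b)` merges two cycles when
`a`, `b` lie in different cycles and otherwise does not decrease the number of cycles, so
`N` grows by at most `1`; a `(k+1)`-cycle is a product of `k` transpositions, hence
`N(w) ≤ k ℓ_k(w)`. A cycle of length `mk + 1` is a product of `m` overlapping `(k+1)`-cycles,
which gives equality when `w` is `1 mod k`. Conversely, equality forces every transposition in
a shortest factorisation to merge two cycles: a `(k+1)`-cycle then fuses `k + 1` distinct
cycles, and if their lengths are all `≡ 1 (mod k)` the new length is `≡ k + 1 ≡ 1`.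
-/

open Finset

lemma List.formPerm_eq_formPerm_take_mul_formPerm_drop {α : Type*} [DecidableEq α]
    (l : List α) (j : ℕ) : l.formPerm = (l.take (j + 1)).formPerm * (l.drop j).formPerm := by
  induction l generalizing j with
  | nil => simp
  | cons a l ih =>
    cases l with
    | nil => cases j <;> simp
    | cons b l =>
      cases j with
      | zero => simp
      | succ j => simp [List.formPerm_cons_cons, ih j, mul_assoc]

namespace Equiv.Perm

section Finite

variable {α : Type*} [Finite α] {f : Perm α} {s : Set α} {x y : α}

lemma SameCycle.mem_of_mapsTo (hs : Set.MapsTo f s s) (h : f.SameCycle x y) (hx : x ∈ s) :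
    y ∈ s := by
  obtain ⟨n, -, rfl⟩ := h.exists_pow_eq'
  exact hs.perm_pow n hx

end Finite

section Swap

variable {α : Type*} [DecidableEq α] {u : Perm α} {a b p q : α}

lemma sameCycle_mul_swap_apply (h : u.SameCycle a b) (z : α) :
    u.SameCycle z ((u * swap a b) z) := by
  rw [mul_apply, sameCycle_apply_right]
  rcases eq_or_ne z a with rfl | hza
  · simpa using h
  rcases eq_or_ne z b with rfl | hzb
  · simpa using h.symm
  · rw [swap_apply_of_ne_of_ne hza hzb]

variable [Finite α]

lemma SameCycle.of_mul_swap (hab : u.SameCycle a b) (h : (u * swap a b).SameCycle p q) :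
    u.SameCycle p q :=
  h.mem_of_mapsTo (s := {z | u.SameCycle p z})
    (fun _ hz => hz.trans (sameCycle_mul_swap_apply hab _)) SameCycle.rfl

/-- Until it returns to `a` or `b`, the orbit of `a` under `u * swap a b` follows that of `b`
under `u`; if `b` is not in the `u`-cycle of `a`, it can only end at `b`. -/
lemma sameCycle_mul_swap_of_not_sameCycle (h : ¬u.SameCycle a b) :
    (u * swap a b).SameCycle a b := by
  by_contra hw
  have horbit : ∀ n : ℕ, (u * swap a b).SameCycle a (((u * swap a b) ^ n) a) := fun _ =>
    SameCycle.rfl.pow_right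
  have key : ∀ n : ℕ, ((u * swap a b) ^ (n + 1)) a = (u ^ (n + 1)) b := by
    intro n
    induction n with
    | zero => simp
    | succ n ih =>
      have hne_a : (u ^ (n + 1)) b ≠ a := fun he =>
        h (he ▸ (SameCycle.rfl (f := u) (x := b)).pow_right (n := n + 1)).symm
      have hne_b : (u ^ (n + 1)) b ≠ b := fun he =>
        hw (by simpa [ih, he] using horbit (n + 1))
      rw [pow_succ', mul_apply, ih, mul_apply, swap_apply_of_ne_of_ne hne_a hne_b, ← mul_apply,
        ← pow_succ']
  have hb := key (orderOf u - 1)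
  rw [Nat.sub_add_cancel (orderOf_pos u), pow_orderOf_eq_one, one_apply] at hb
  exact hw (by simpa [hb] using horbit (orderOf u))

lemma sameCycle_mul_swap_iff (h : ¬u.SameCycle a b) :
    (u * swap a b).SameCycle p q ↔ u.SameCycle p q ∨
      ((u.SameCycle a p ∨ u.SameCycle b p) ∧ (u.SameCycle a q ∨ u.SameCycle b q)) := by
  have hw := sameCycle_mul_swap_of_not_sameCycle h
  have hu : u * swap a b * swap a b = u := by simp [mul_assoc]
  constructor
  · refine fun hpq => hpq.mem_of_mapsTo (s := {z | u.SameCycle p z ∨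
      ((u.SameCycle a p ∨ u.SameCycle b p) ∧ (u.SameCycle a z ∨ u.SameCycle b z))})
      (fun z hz => ?_) (Or.inl SameCycle.rfl)
    simp only [Set.mem_ofPred_eq, mul_apply] at hz ⊢
    rcases eq_or_ne z a with rfl | hza
    · simp only [swap_apply_left, sameCycle_apply_right]
      grind [SameCycle.symm, SameCycle.trans, SameCycle.rfl]
    rcases eq_or_ne z b with rfl | hzb
    · simp only [swap_apply_right, sameCycle_apply_right]
      grind [SameCycle.symm, SameCycle.trans, SameCycle.rfl]
    · simpa only [swap_apply_of_ne_of_ne hza hzb, sameCycle_apply_right] using hz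
  · -- `u` is `(u * swap a b) * swap a b`, and `a`, `b` share a cycle of `u * swap a b`.
    have hsub : ∀ {p q}, u.SameCycle p q → (u * swap a b).SameCycle p q := fun hpq =>
      SameCycle.of_mul_swap hw (by rwa [hu])
    rintro (hpq | ⟨hp | hp, hq | hq⟩)
    · exact hsub hpq
    · exact (hsub hp).symm.trans (hsub hq)
    · exact (hsub hp).symm.trans (hw.trans (hsub hq))
    · exact (hsub hp).symm.trans (hw.symm.trans (hsub hq))
    · exact (hsub hp).symm.trans (hsub hq)

end Swap

section CycleCount

variable {α : Type*} [Fintype α] [DecidableEq α] {u v : Perm α} {a b p q : α}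

/-- Unlike `(u.cycleOf p).support`, this is `{p}` rather than `∅` when `p` is fixed. -/
def cycleClass (u : Perm α) (p : α) : Finset α := {q | u.SameCycle p q}

@[simp]
lemma mem_cycleClass : q ∈ u.cycleClass p ↔ u.SameCycle p q := by
  simp [cycleClass]

lemma SameCycle.cycleClass_eq (h : u.SameCycle p q) : u.cycleClass p = u.cycleClass q := by
  ext z
  simp only [mem_cycleClass]
  exact ⟨h.symm.trans, h.trans⟩

lemma card_cycleClass_pos : 0 < #(u.cycleClass p) :=
  card_pos.2 ⟨p, mem_cycleClass.2 SameCycle.rfl⟩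

lemma cycleClass_of_notMem_support (hp : p ∉ u.support) : u.cycleClass p = {p} := by
  ext q
  simp only [mem_cycleClass, mem_singleton]
  exact ⟨fun h => (h.eq_of_left (notMem_support.1 hp)).symm, fun h => h ▸ SameCycle.rfl⟩

lemma cycleClass_eq_support_cycleOf (hp : p ∈ u.support) :
    u.cycleClass p = (u.cycleOf p).support := by
  ext q
  rw [mem_cycleClass, mem_support_cycleOf_iff]
  exact ⟨fun h => ⟨h, hp⟩, And.left⟩

lemma disjoint_cycleClass_of_not_sameCycle (h : ¬u.SameCycle a b) :
    _root_.Disjoint (u.cycleClass a) (u.cycleClass b) :=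
  disjoint_left.2 fun _ ha hb => h ((mem_cycleClass.1 ha).trans (mem_cycleClass.1 hb).symm)

lemma exists_card_cycleClass_eq_of_mem_cycleType {n : ℕ} (hn : n ∈ u.cycleType) :
    ∃ p, #(u.cycleClass p) = n := by
  obtain ⟨c, hc, rfl⟩ := Multiset.mem_map.1 hn
  obtain ⟨p, hp⟩ := (mem_cycleFactorsFinset_iff.1 hc).1.nonempty_support
  refine ⟨p, ?_⟩
  rw [cycleClass_eq_support_cycleOf (mem_cycleFactorsFinset_support_le hc hp),
    ← cycle_is_cycleOf hp hc]
  rfl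

lemma cycleClass_mul_swap_of_not_sameCycle (h : ¬u.SameCycle a b) (p : α) :
    (u * swap a b).cycleClass p =
      if p ∈ u.cycleClass a ∪ u.cycleClass b then u.cycleClass a ∪ u.cycleClass b
      else u.cycleClass p := by
  ext q
  split_ifs with hp <;>
  · simp only [mem_union, mem_cycleClass] at hp ⊢
    rw [sameCycle_mul_swap_iff h]
    grind [SameCycle.symm, SameCycle.trans]

/-- The number of cycles of `u`, fixed points included: a cycle with `n` points contributes
`n` times `1 / n`. -/
noncomputable def cycleCount (u : Perm α) : ℚ := ∑ p, (#(u.cycleClass p) : ℚ)⁻¹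

lemma sum_inv_card_cycleClass (u : Perm α) (a : α) :
    ∑ p ∈ u.cycleClass a, (#(u.cycleClass p) : ℚ)⁻¹ = 1 := by
  rw [sum_congr rfl fun p hp => by rw [← (mem_cycleClass.1 hp).cycleClass_eq], sum_const,
    nsmul_eq_mul]
  exact mul_inv_cancel₀ (by exact_mod_cast card_cycleClass_pos.ne')

lemma cycleCount_eq (u : Perm α) :
    u.cycleCount = u.cycleType.card + (Fintype.card α - #u.support : ℕ) := by
  have hfiber : ∀ c ∈ u.cycleFactorsFinset,
      ∑ p ∈ u.support with u.cycleOf p = c, (#(u.cycleClass p) : ℚ)⁻¹ = 1 := by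
    intro c hc
    obtain ⟨q, hq⟩ := (mem_cycleFactorsFinset_iff.1 hc).1.nonempty_support
    have hqu := mem_cycleFactorsFinset_support_le hc hq
    convert sum_inv_card_cycleClass u q using 2
    rw [cycleClass_eq_support_cycleOf hqu, ← cycle_is_cycleOf hq hc]
    ext p
    simp only [mem_filter]
    constructor
    · rintro ⟨hp, rfl⟩
      exact mem_support_cycleOf_iff.2 ⟨SameCycle.rfl, hp⟩
    · intro hp
      exact ⟨mem_cycleFactorsFinset_support_le hc hp, (cycle_is_cycleOf hp hc).symm⟩
  have hfixed : ∀ p ∈ u.supportᶜ, (#(u.cycleClass p) : ℚ)⁻¹ = 1 := fun p hp => by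
    simp [cycleClass_of_notMem_support (mem_compl.1 hp)]
  rw [cycleCount, ← sum_add_sum_compl u.support,
    ← sum_fiberwise_of_maps_to fun p hp => cycleOf_mem_cycleFactorsFinset_iff.2 hp,
    sum_congr rfl hfiber, sum_congr rfl hfixed]
  simp [cycleType_def, card_compl]

lemma card_sub_cycleCount (u : Perm α) :
    Fintype.card α - u.cycleCount = #u.support - u.cycleType.card := by
  rw [cycleCount_eq, Nat.cast_sub (card_le_univ _)]
  ring

lemma cycleCount_one : (1 : Perm α).cycleCount = Fintype.card α := by
  simp [cycleCount_eq]

lemma cycleCount_le_of_sameCycle_imp (h : ∀ p q, v.SameCycle p q → u.SameCycle p q) :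
    u.cycleCount ≤ v.cycleCount :=
  sum_le_sum fun _ _ => inv_anti₀ (by exact_mod_cast card_cycleClass_pos) <| by
    exact_mod_cast card_le_card fun _ hq => mem_cycleClass.2 (h _ _ (mem_cycleClass.1 hq))

lemma cycleCount_le_mul_swap_of_sameCycle (h : u.SameCycle a b) :
    u.cycleCount ≤ (u * swap a b).cycleCount :=
  cycleCount_le_of_sameCycle_imp fun _ _ => h.of_mul_swap

lemma cycleCount_mul_swap_of_not_sameCycle (h : ¬u.SameCycle a b) :
    (u * swap a b).cycleCount = u.cycleCount - 1 := by
  set M := u.cycleClass a ∪ u.cycleClass b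
  have hM : M = (u * swap a b).cycleClass a := by
    rw [cycleClass_mul_swap_of_not_sameCycle h,
      if_pos (mem_union_left _ (mem_cycleClass.2 SameCycle.rfl))]
  have hu : ∑ p ∈ M, (#(u.cycleClass p) : ℚ)⁻¹ = 2 := by
    rw [sum_union (disjoint_cycleClass_of_not_sameCycle h), sum_inv_card_cycleClass,
      sum_inv_card_cycleClass]
    norm_num
  have hw : ∑ p ∈ M, (#((u * swap a b).cycleClass p) : ℚ)⁻¹ = 1 := by
    rw [hM, sum_inv_card_cycleClass]
  have hcompl : ∑ p ∈ Mᶜ, (#((u * swap a b).cycleClass p) : ℚ)⁻¹ =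
      ∑ p ∈ Mᶜ, (#(u.cycleClass p) : ℚ)⁻¹ :=
    sum_congr rfl fun p hp => by
      rw [cycleClass_mul_swap_of_not_sameCycle h, if_neg (mem_compl.1 hp)]
  rw [cycleCount, cycleCount, ← sum_add_sum_compl M, hw, hcompl, ← sum_add_sum_compl M, hu]
  ring

lemma cycleCount_sub_one_le_mul_swap (u : Perm α) (a b : α) :
    u.cycleCount - 1 ≤ (u * swap a b).cycleCount := by
  by_cases h : u.SameCycle a b
  · linarith [cycleCount_le_mul_swap_of_sameCycle h]
  · rw [cycleCount_mul_swap_of_not_sameCycle h]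

end CycleCount

section KCycles

variable {α : Type*} [Fintype α] [DecidableEq α] {k r : ℕ} {t u : Perm α} {x y : α}

lemma IsCycle.exists_formPerm_eq (ht : t.IsCycle) :
    ∃ x l, (x :: l).Nodup ∧ (x :: l).formPerm = t ∧ l.length + 1 = #t.support := by
  obtain ⟨x, hx⟩ := ht.nonempty_support
  have hcyc : t.cycleOf x = t := ht.cycleOf_eq (mem_support.1 hx)
  obtain ⟨y, l, hl⟩ := List.exists_cons_of_ne_nil (mt toList_eq_nil_iff.1 (not_not.2 hx))
  refine ⟨y, l, hl ▸ nodup_toList t x, by rw [← hl, formPerm_toList, hcyc], ?_⟩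
  rw [← List.length_cons, ← hl, length_toList, hcyc]

lemma cycleCount_sub_length_le_mul_formPerm (x : α) (l : List α) (u : Perm α) :
    u.cycleCount - l.length ≤ (u * (x :: l).formPerm).cycleCount := by
  induction l generalizing x u with
  | nil => simp
  | cons y l ih =>
    rw [List.formPerm_cons_cons, ← mul_assoc]
    have := ih y (u * swap x y)
    have := cycleCount_sub_one_le_mul_swap u x y
    push_cast [List.length_cons]
    linarith

lemma cycleCount_sub_le_mul_of_isCycle (ht : t.IsCycle) (htk : #t.support = k + 1)
    (u : Perm α) : u.cycleCount - k ≤ (u * t).cycleCount := by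
  obtain ⟨x, l, -, rfl, hl⟩ := ht.exists_formPerm_eq
  obtain rfl : l.length = k := by omega
  exact cycleCount_sub_length_le_mul_formPerm x l u

lemma cycleCount_sub_le_mul_prod {L : List (Perm α)}
    (hL : ∀ t ∈ L, t.IsCycle ∧ #t.support = k + 1) (u : Perm α) :
    u.cycleCount - k * L.length ≤ (u * L.prod).cycleCount := by
  induction L generalizing u with
  | nil => simp
  | cons t L ih =>
    rw [List.prod_cons, ← mul_assoc]
    have := cycleCount_sub_le_mul_of_isCycle (hL t List.mem_cons_self).1
      (hL t List.mem_cons_self).2 u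
    have := ih (fun s hs => hL s (List.mem_cons_of_mem _ hs)) (u * t)
    push_cast [List.length_cons]
    linarith

/-- The invariant kept while a `(k+1)`-cycle `(x₀ … x_k)` is multiplied in as the transpositions
`(x₀ x₁), (x₁ x₂), …`: the exceptional cycle is the one through the current `xᵢ`. -/
def OneModExcept (k : ℕ) (u : Perm α) (x : α) (r : ℕ) : Prop :=
  ∀ p, #(u.cycleClass p) ≡ if u.SameCycle x p then r else 1 [MOD k]

lemma OneModExcept.mul_swap (hu : OneModExcept k u x r) (hxy : ¬u.SameCycle x y) :
    OneModExcept k (u * swap x y) y (r + 1) := by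
  intro p
  have hy : (u * swap x y).SameCycle y p ↔ p ∈ u.cycleClass x ∪ u.cycleClass y := by
    rw [← mem_cycleClass, cycleClass_mul_swap_of_not_sameCycle hxy,
      if_pos (mem_union_right _ (mem_cycleClass.2 SameCycle.rfl))]
  rw [cycleClass_mul_swap_of_not_sameCycle hxy p]
  by_cases hp : p ∈ u.cycleClass x ∪ u.cycleClass y
  · have hux := hu x
    have huy := hu y
    rw [if_pos SameCycle.rfl] at hux
    rw [if_neg hxy] at huy
    rw [if_pos hp, if_pos (hy.2 hp), card_union_of_disjoint
      (disjoint_cycleClass_of_not_sameCycle hxy)]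
    exact hux.add huy
  · have hup := hu p
    rw [if_neg fun h => hp (mem_union_left _ (mem_cycleClass.2 h))] at hup
    rwa [if_neg hp, if_neg (mt hy.1 hp)]

lemma exists_oneModExcept_mul_formPerm (l : List α) (hu : OneModExcept k u x r)
    (h : (u * (x :: l).formPerm).cycleCount = u.cycleCount - l.length) :
    ∃ y, OneModExcept k (u * (x :: l).formPerm) y (r + l.length) := by
  induction l generalizing x u r with
  | nil => exact ⟨x, by simpa using hu⟩
  | cons y l ih =>
    rw [List.formPerm_cons_cons, ← mul_assoc] at h ⊢
    have h₁ := cycleCount_sub_one_le_mul_swap u x y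
    have h₂ := cycleCount_sub_length_le_mul_formPerm y l (u * swap x y)
    push_cast [List.length_cons] at h
    have hxy : ¬u.SameCycle x y := fun hxy => by
      linarith [cycleCount_le_mul_swap_of_sameCycle hxy]
    obtain ⟨z, hz⟩ := ih (hu.mul_swap hxy) (by linarith)
    exact ⟨z, by rwa [List.length_cons, ← add_assoc, add_right_comm]⟩

lemma modEq_one_mul_of_cycleCount_eq (ht : t.IsCycle) (htk : #t.support = k + 1)
    (hu : ∀ p, #(u.cycleClass p) ≡ 1 [MOD k])
    (h : (u * t).cycleCount = u.cycleCount - k) (p : α) :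
    #((u * t).cycleClass p) ≡ 1 [MOD k] := by
  obtain ⟨x, l, -, rfl, hl⟩ := ht.exists_formPerm_eq
  obtain rfl : l.length = k := by omega
  obtain ⟨y, hy⟩ := exists_oneModExcept_mul_formPerm (r := 1) l
    (fun p => by split_ifs <;> exact hu p) h
  have hyp := hy p
  split_ifs at hyp
  exacts [hyp.trans (Nat.add_modEq_left_iff.2 dvd_rfl), hyp]

lemma modEq_one_mul_prod_of_cycleCount_eq {L : List (Perm α)}
    (hL : ∀ t ∈ L, t.IsCycle ∧ #t.support = k + 1) (hu : ∀ p, #(u.cycleClass p) ≡ 1 [MOD k])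
    (h : (u * L.prod).cycleCount = u.cycleCount - k * L.length) (p : α) :
    #((u * L.prod).cycleClass p) ≡ 1 [MOD k] := by
  induction L generalizing u with
  | nil => simpa using hu p
  | cons t L ih =>
    rw [List.prod_cons, ← mul_assoc] at h ⊢
    have ht := hL t List.mem_cons_self
    have hL' : ∀ s ∈ L, s.IsCycle ∧ #s.support = k + 1 := fun s hs =>
      hL s (List.mem_cons_of_mem _ hs)
    have h₁ := cycleCount_sub_le_mul_of_isCycle ht.1 ht.2 u
    have h₂ := cycleCount_sub_le_mul_prod hL' (u * t)
    push_cast [List.length_cons] at h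
    exact ih hL' (modEq_one_mul_of_cycleCount_eq ht.1 ht.2 hu (by linarith)) (by linarith)

lemma card_sub_cycleCount_prod_le {L : List (Perm α)}
    (hL : ∀ t ∈ L, t.IsCycle ∧ #t.support = k + 1) :
    Fintype.card α - L.prod.cycleCount ≤ k * L.length := by
  have := cycleCount_sub_le_mul_prod hL 1
  rw [one_mul, cycleCount_one] at this
  linarith

lemma modEq_one_of_mem_cycleType_prod {L : List (Perm α)}
    (hL : ∀ t ∈ L, t.IsCycle ∧ #t.support = k + 1)
    (h : k * L.length = Fintype.card α - L.prod.cycleCount) {n : ℕ}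
    (hn : n ∈ L.prod.cycleType) : n ≡ 1 [MOD k] := by
  obtain ⟨p, rfl⟩ := exists_card_cycleClass_eq_of_mem_cycleType hn
  have hone : ∀ p, #((1 : Perm α).cycleClass p) ≡ 1 [MOD k] := fun p => by
    rw [cycleClass_of_notMem_support (by simp), card_singleton]
  simpa using
    modEq_one_mul_prod_of_cycleCount_eq hL hone (by rw [one_mul, cycleCount_one]; linarith) p

end KCycles

section Decomposition

variable {α : Type*} [Fintype α] [DecidableEq α] {k : ℕ}

lemma exists_prod_kCycles_eq_formPerm (hk : 0 < k) (m : ℕ) {l : List α} (hl : l.Nodup)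
    (hlen : l.length = m * k + 1) :
    ∃ L : List (Perm α), (∀ t ∈ L, t.IsCycle ∧ #t.support = k + 1) ∧ L.length = m ∧
      L.prod = l.formPerm := by
  induction m generalizing l with
  | zero =>
    obtain ⟨x, rfl⟩ := List.length_eq_one_iff.1 (by simpa using hlen)
    exact ⟨[], by simp⟩
  | succ m ih =>
    have hhead : (l.take (k + 1)).length = k + 1 := by
      rw [List.length_take, min_eq_left (by rw [hlen]; nlinarith)]
    have hhead_nodup := hl.sublist (List.take_sublist (k + 1) l)
    obtain ⟨L, hL, rfl, hprod⟩ := ih (hl.sublist (List.drop_sublist k l))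
      (by rw [List.length_drop, hlen, add_mul]; omega)
    refine ⟨(l.take (k + 1)).formPerm :: L, ?_, rfl, ?_⟩
    · intro t ht
      rcases List.mem_cons.1 ht with rfl | ht
      · refine ⟨List.isCycle_formPerm hhead_nodup (by omega), ?_⟩
        rw [List.support_formPerm_of_nodup _ hhead_nodup fun x hx => by simp [hx] at hhead; omega,
          List.toFinset_card_of_nodup hhead_nodup, hhead]
      · exact hL t ht
    · rw [List.prod_cons, hprod, ← List.formPerm_eq_formPerm_take_mul_formPerm_drop]

lemma IsCycle.exists_prod_kCycles_eq (hk : 0 < k) {c : Perm α} (hc : c.IsCycle)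
    (hmod : #c.support ≡ 1 [MOD k]) :
    ∃ L : List (Perm α), (∀ t ∈ L, t.IsCycle ∧ #t.support = k + 1) ∧
      k * L.length + 1 = #c.support ∧ L.prod = c := by
  obtain ⟨x, l, hl, rfl, hlen⟩ := hc.exists_formPerm_eq
  obtain ⟨m, hm⟩ := Nat.add_modEq_right_iff.1 (hlen ▸ hmod)
  obtain ⟨L, hL, rfl, hprod⟩ := exists_prod_kCycles_eq_formPerm hk m hl (by simp [hm, mul_comm])
  exact ⟨L, hL, by rw [← hlen, hm], hprod⟩

lemma exists_prod_kCycles_eq_of_forall_mem_cycleType (hk : 0 < k) (w : Perm α)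
    (h : ∀ n ∈ w.cycleType, n ≡ 1 [MOD k]) :
    ∃ L : List (Perm α), (∀ t ∈ L, t.IsCycle ∧ #t.support = k + 1) ∧
      k * L.length + w.cycleType.card = #w.support ∧ L.prod = w := by
  induction w using cycle_induction_on with
  | base_one => exact ⟨[], by simp⟩
  | base_cycles c hc =>
    obtain ⟨L, hL, hlen, hprod⟩ := hc.exists_prod_kCycles_eq hk (h _ (by simp [hc.cycleType]))
    exact ⟨L, hL, by simpa [hc.cycleType] using hlen, hprod⟩
  | induction_disjoint σ τ hd _ hσ hτ =>
    rw [hd.cycleType_mul] at h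
    obtain ⟨L₁, hL₁, hlen₁, rfl⟩ := hσ fun n hn => h n (Multiset.mem_add.2 (Or.inl hn))
    obtain ⟨L₂, hL₂, hlen₂, rfl⟩ := hτ fun n hn => h n (Multiset.mem_add.2 (Or.inr hn))
    refine ⟨L₁ ++ L₂, fun t ht => (List.mem_append.1 ht).elim (hL₁ t) (hL₂ t), ?_,
      List.prod_append⟩
    rw [hd.cycleType_mul, hd.card_support_mul, List.length_append, Multiset.card_add, mul_add]
    omega

end Decomposition

end Equiv.Perm

open Equiv Perm

lemma ellK_prod_le_length {k N : ℕ} {L : List (Perm (Fin N))} (hL : ∀ t ∈ L, IsKCycle k t) :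
    ellK k L.prod ≤ L.length :=
  Nat.sInf_le (s := {m | ∃ l : List (Perm (Fin N)),
    l.length = m ∧ (∀ t ∈ l, IsKCycle k t) ∧ l.prod = L.prod}) ⟨L, rfl, hL, rfl⟩

lemma exists_length_eq_ellK {k N : ℕ} {w : Perm (Fin N)} (hw : w ∈ kGenSubgroup k N) :
    ∃ L : List (Perm (Fin N)), L.length = ellK k w ∧ (∀ t ∈ L, IsKCycle k t) ∧ L.prod = w := by
  rw [kGenSubgroup, ← Subgroup.mem_toSubmonoid, Subgroup.closure_toSubmonoid_of_finite] at hw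
  obtain ⟨L, hL, hprod⟩ := Submonoid.exists_list_of_mem_closure hw
  exact Nat.sInf_mem (s := {m | ∃ l : List (Perm (Fin N)),
    l.length = m ∧ (∀ t ∈ l, IsKCycle k t) ∧ l.prod = w}) ⟨L.length, L, rfl, hL, hprod⟩

lemma cycleCount_eq_cyc {N : ℕ} (w : Perm (Fin N)) : w.cycleCount = cyc w := by
  simp [cyc, cycleCount_eq]

theorem one_mod_k_iff_length_general (k K : ℕ) (hk : 1 ≤ k)
    (w : Equiv.Perm (Fin K)) (hw : w ∈ kGenSubgroup k K) :
    IsOneModK k w ↔ (k : ℤ) * ellK k w = (K : ℤ) - cyc w := by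
  obtain ⟨L₀, hlen, hL₀, rfl⟩ := exists_length_eq_ellK hw
  have hcard : (K : ℚ) = Fintype.card (Fin K) := by simp
  rw [← @Int.cast_inj ℚ]
  push_cast
  rw [← cycleCount_eq_cyc, hcard, ← hlen]
  constructor
  · intro h
    obtain ⟨L, hL, hLlen, hprod⟩ := exists_prod_kCycles_eq_of_forall_mem_cycleType hk _ h
    have hle : (L₀.length : ℚ) ≤ L.length := by
      exact_mod_cast hlen ▸ hprod ▸ ellK_prod_le_length hL
    have hL_eq : Fintype.card (Fin K) - L₀.prod.cycleCount = k * L.length := by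
      rw [card_sub_cycleCount, ← hLlen]
      push_cast
      ring
    have := mul_le_mul_of_nonneg_left hle (Nat.cast_nonneg (α := ℚ) k)
    linarith [card_sub_cycleCount_prod_le hL₀]
  · exact fun h n hn => modEq_one_of_mem_cycleType_prod hL₀ h hn

/-- Lemma 2.2: `w` is `1 mod k` if and only if `k * ℓ_k(w) = K - cyc(w)`. -/
theorem one_mod_k_iff_length (k K : ℕ) (hk : 1 ≤ k) (hK : 1 ≤ K)
    (w : Equiv.Perm (Fin K)) (hw : w ∈ kGenSubgroup k K) :
    IsOneModK k w ↔ (k : ℤ) * ellK k w = (K : ℤ) - cyc w :=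
  one_mod_k_iff_length_general k K hk w hw
end

section
/- Fix integers k, n ≥ 1 and set N = kn+1. For every permutation w of {1,...,N}, if w ≤_k c_N then the Kreweras complement w⁻¹c_N also satisfies w⁻¹c_N ≤_k c_N; that is, NC_{N;k} is stable under Kreweras complementation. -/
/-! `ℓ_k` is invariant under conjugation, and `(u⁻¹ c)⁻¹ c = c⁻¹ u c` is conjugate to `u`;
so `ℓ_k(u⁻¹ c) + ℓ_k((u⁻¹ c)⁻¹ c) = ℓ_k(u⁻¹ c) + ℓ_k(u) = ℓ_k(c)` for every `u ≤_k c`,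
whatever `c` is. -/

open Equiv

theorem IsKCycle.conj {k N : ℕ} {t : Perm (Fin N)} (ht : IsKCycle k t) (g : Perm (Fin N)) :
    IsKCycle k (g * t * g⁻¹) :=
  ⟨ht.1.conj, by rw [Perm.card_support_conj]; exact ht.2⟩

theorem exists_kCycle_factorization_conj {k N : ℕ} {w : Perm (Fin N)} {l : List (Perm (Fin N))}
    (hl : ∀ t ∈ l, IsKCycle k t) (hprod : l.prod = w) (g : Perm (Fin N)) :
    ∃ l' : List (Perm (Fin N)),
      l'.length = l.length ∧ (∀ t ∈ l', IsKCycle k t) ∧ l'.prod = g * w * g⁻¹ := by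
  refine ⟨l.map (MulAut.conj g), List.length_map _, ?_, ?_⟩
  · simp only [List.mem_map, MulAut.conj_apply]
    rintro _ ⟨t, ht, rfl⟩
    exact (hl t ht).conj g
  · rw [← map_list_prod, hprod, MulAut.conj_apply]

theorem ellK_conj (k : ℕ) {N : ℕ} (g w : Perm (Fin N)) : ellK k (g * w * g⁻¹) = ellK k w := by
  unfold ellK
  congr 1
  ext m
  constructor
  · rintro ⟨l, rfl, hl, hprod⟩
    simpa [mul_assoc] using exists_kCycle_factorization_conj hl hprod g⁻¹
  · rintro ⟨l, rfl, hl, hprod⟩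
    exact exists_kCycle_factorization_conj hl hprod g

theorem absLe_inv_mul_self {k N : ℕ} {u c : Perm (Fin N)} (h : absLe k u c) :
    absLe k (u⁻¹ * c) c := by
  have hconj : (u⁻¹ * c)⁻¹ * c = c⁻¹ * u * c⁻¹⁻¹ := by group
  unfold absLe at *
  rw [hconj, ellK_conj]
  omega

theorem kreweras_stable_general (k : ℕ)
    (N : ℕ) (w : Equiv.Perm (Fin N))
    (hw : absLe k w (finRotate N)) :
    absLe k (w⁻¹ * finRotate N) (finRotate N) :=
  absLe_inv_mul_self hw

/-- Corollary 3.3: `NC_{N;k}` is stable under Kreweras complementation: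
`w ≤_k c_N` implies `w⁻¹ c_N ≤_k c_N`. -/
theorem kreweras_stable (k n : ℕ) (hk : 1 ≤ k) (hn : 1 ≤ n)
    (N : ℕ) (hN : N = k * n + 1) (w : Equiv.Perm (Fin N))
    (hw : absLe k w (finRotate N)) :
    absLe k (w⁻¹ * finRotate N) (finRotate N) :=
  kreweras_stable_general k N w hw
end

section
/- Fix integers k, n ≥ 1 and set N = kn+1. The number of order ideals (downward-closed subsets) of the poset Δ_{N;k} equals (2/(N+1))·binomial(N+n, n); equivalently, (N+1) times the number of order ideals equals 2·binomial(N+n, n). -/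
/-- the underlying set of the poset `Δ_{N;k}`:
pairs `(a,b)` with `1 ≤ a < b ≤ N-k+1` and `a ≡ 1 (mod k)`. -/
def DeltaSet (N k : ℕ) : Set (ℤ × ℤ) :=
  {p | 1 ≤ p.1 ∧ p.1 < p.2 ∧ p.2 ≤ (N : ℤ) - (k : ℤ) + 1 ∧ p.1 % (k : ℤ) = 1 % (k : ℤ)}

/-! An order ideal of `Δ_{N;k}` is determined by its row lengths. Reading the `n` rows from
the top (largest first coordinate), row `j` has `1 + k j` cells, and downward closure says
exactly that the row lengths `e₀, e₁, …` satisfy `e₀ ≤ 1` and `e_{j+1} ≤ e_j + k`. Counting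
such sequences of length `n` with `e₀ ≤ m` by their first entry gives a recursion solved by the
ballot-type number `C((k+1)n+m, n) - k C((k+1)n+m, n-1) = (m+1)/(kn+m+1) C((k+1)n+m, n)`;
for `m = 1` this is the claim. -/

open Finset

def stepLists (k : ℕ) : ℕ → ℕ → Finset (List ℕ)
  | 0, _ => {[]}
  | n + 1, m => (range (m + 1)).biUnion fun a => (stepLists k n (a + k)).image (a :: ·)

theorem mem_stepLists_iff {k n m : ℕ} {l : List ℕ} :
    l ∈ stepLists k n m ↔
      l.length = n ∧ l.getD 0 0 ≤ m ∧ ∀ j, l.getD (j + 1) 0 ≤ l.getD j 0 + k := by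
  induction n generalizing m l with
  | zero => cases l <;> simp [stepLists]
  | succ n ih =>
    cases l with
    | nil => simp [stepLists]
    | cons a t =>
      rw [← Nat.and_forall_add_one]
      simp only [stepLists, mem_biUnion, mem_range, mem_image, List.cons.injEq, ih,
        List.length_cons, List.getD_cons_zero, List.getD_cons_succ]
      constructor
      · rintro ⟨_, ha, _, ⟨hlen, h0, hstep⟩, rfl, rfl⟩
        exact ⟨by omega, by omega, h0, hstep⟩
      · rintro ⟨hlen, ha, h0, hstep⟩
        exact ⟨a, by omega, t, ⟨by omega, h0, hstep⟩, rfl, rfl⟩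

theorem card_stepLists_succ (k n m : ℕ) :
    #(stepLists k (n + 1) m) = ∑ a ∈ range (m + 1), #(stepLists k n (a + k)) := by
  rw [stepLists, card_biUnion]
  · exact sum_congr rfl fun a _ => card_image_of_injective _ List.cons_injective
  · intro a _ b _ hab
    simp only [Function.onFun, disjoint_left, mem_image]
    rintro _ ⟨s, -, rfl⟩ ⟨t, -, h⟩
    exact hab (List.cons_eq_cons.mp h).1.symm

theorem card_stepLists_succ_zero (k n : ℕ) :
    #(stepLists k (n + 1) 0) = #(stepLists k n k) := by
  simp [card_stepLists_succ]

theorem card_stepLists_succ_succ (k n m : ℕ) :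
    #(stepLists k (n + 1) (m + 1)) = #(stepLists k (n + 1) m) + #(stepLists k n (m + 1 + k)) := by
  rw [card_stepLists_succ, card_stepLists_succ, sum_range_succ]

theorem add_one_mul_choose_add (k n : ℕ) :
    (k + 1) * ((k + 1) * n + k).choose n = ((k + 1) * (n + 1)).choose (n + 1) := by
  have h := Nat.add_one_mul_choose_eq ((k + 1) * n + k) n
  rw [show (k + 1) * n + k + 1 = (k + 1) * (n + 1) by ring] at h
  refine Nat.eq_of_mul_eq_mul_right (by omega : 0 < n + 1) ?_
  rw [← h]
  ring

-- In this subtractive form the recursion in `m` is just Pascal's rule.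
theorem card_stepLists_add_mul_choose (k n m : ℕ) :
    #(stepLists k (n + 1) m) + k * ((k + 1) * (n + 1) + m).choose n =
      ((k + 1) * (n + 1) + m).choose (n + 1) := by
  induction n generalizing m with
  | zero =>
    rw [card_stepLists_succ]
    simp [stepLists]
    ring
  | succ n ih =>
    induction m with
    | zero =>
      have hY : (k + 1) * (n + 1 + 1) = (k + 1) * (n + 1) + k + 1 := by ring
      rw [card_stepLists_succ_zero, add_zero, ← add_one_mul_choose_add, hY,
        Nat.choose_succ_succ']
      linarith [ih k]
    | succ m ihm =>
      have hZ : (k + 1) * (n + 1) + (m + 1 + k) = (k + 1) * (n + 1 + 1) + m := by ring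
      have ih' := ih (m + 1 + k)
      rw [hZ] at ih'
      rw [card_stepLists_succ_succ, ← add_assoc, Nat.choose_succ_succ', Nat.choose_succ_succ']
      linarith

theorem mul_card_stepLists (k n m : ℕ) :
    (k * n + m + 1) * #(stepLists k n m) = (m + 1) * ((k + 1) * n + m).choose n := by
  cases n with
  | zero => simp [stepLists]
  | succ n =>
    have hF := card_stepLists_add_mul_choose k n m
    have hC := Nat.choose_succ_right_eq ((k + 1) * (n + 1) + m) n
    rw [show (k + 1) * (n + 1) + m - n = k * (n + 1) + m + 1 by
      rw [Nat.sub_eq_iff_eq_add (by nlinarith)]; ring] at hC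
    zify at hF hC ⊢
    linear_combination (k * (n + 1) + m + 1 : ℤ) * hF + k * hC

theorem le_add_mul_sub_of_forall_succ_le {e : ℕ → ℕ} {k : ℕ} (h : ∀ j, e (j + 1) ≤ e j + k)
    {i j : ℕ} (hij : i ≤ j) : e j ≤ e i + k * (j - i) := by
  induction j, hij using Nat.le_induction with
  | base => simp
  | succ j hij ih =>
    rw [Nat.sub_add_comm hij, Nat.mul_succ]
    linarith [h j]

theorem Finset.eq_Icc_one_card {s : Finset ℕ} (hpos : ∀ t ∈ s, 1 ≤ t)
    (hdown : ∀ t ∈ s, ∀ t', 1 ≤ t' → t' ≤ t → t' ∈ s) : s = Icc 1 #s := by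
  have hle : ∀ t ∈ s, t ≤ #s := fun t ht => by
    simpa using card_le_card fun t' ht' =>
      hdown t ht t' (mem_Icc.mp ht').1 (mem_Icc.mp ht').2
  refine eq_of_subset_of_card_le (fun t ht => mem_Icc.mpr ⟨hpos t ht, hle t ht⟩) ?_
  simp

theorem getD_map_range {α : Type*} (f : ℕ → α) (n j : ℕ) (d : α) :
    ((List.range n).map f).getD j d = if j < n then f j else d := by
  split_ifs with h <;> simp [List.getD_eq_getElem?_getD, h]

-- Rows are numbered from the top: row `j < n` of `Δ_{kn+1;k}` consists of the cells
-- `cell k n j t` with `1 ≤ t ≤ 1 + k j`.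
def rowStart (k n j : ℕ) : ℕ := k * (n - 1 - j) + 1

def cell (k n j t : ℕ) : ℤ × ℤ := (rowStart k n j, rowStart k n j + t)

def IsDeltaIdeal (N k : ℕ) (I : Set (ℤ × ℤ)) : Prop :=
  I ⊆ DeltaSet N k ∧ ∀ p ∈ I, ∀ q ∈ DeltaSet N k, p.1 ≤ q.1 → q.2 ≤ p.2 → q ∈ I

def ofRowLengths (k n : ℕ) (e : ℕ → ℕ) : Set (ℤ × ℤ) :=
  {p | ∃ j < n, ∃ t, 1 ≤ t ∧ t ≤ e j ∧ cell k n j t = p}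

open Classical in
noncomputable def rowLength (k n : ℕ) (I : Set (ℤ × ℤ)) (j : ℕ) : ℕ :=
  #{t ∈ Icc 1 (1 + k * j) | cell k n j t ∈ I}

section RowLengths

variable {k n : ℕ}

theorem rowStart_eq_add {j j' : ℕ} (h : j' ≤ j) (hj : j < n) :
    rowStart k n j' = rowStart k n j + k * (j - j') := by
  rw [rowStart, rowStart, add_right_comm, ← mul_add]
  congr 2
  omega

theorem rowStart_add_mul_add {j : ℕ} (hj : j < n) :
    rowStart k n j + k * j + k = k * n + 1 := by
  have h := rowStart_eq_add (k := k) (Nat.zero_le j) hj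
  rw [rowStart, Nat.sub_zero, Nat.sub_zero] at h
  rw [← h, add_right_comm, ← Nat.mul_add_one, Nat.sub_add_cancel (by omega)]

theorem cell_le_cell_iff (hk : 0 < k) {j j' t t' : ℕ} (hj : j < n) (hj' : j' < n) :
    ((cell k n j t).1 ≤ (cell k n j' t').1 ∧ (cell k n j' t').2 ≤ (cell k n j t).2) ↔
      j' ≤ j ∧ t' + k * (j - j') ≤ t := by
  simp only [cell]
  rcases le_or_gt j' j with h | h
  · have := rowStart_eq_add (k := k) h hj
    omega
  · have := rowStart_eq_add (k := k) h.le hj'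
    have : 0 < k * (j' - j) := Nat.mul_pos hk (by omega)
    omega

theorem cell_inj (hk : 0 < k) {j j' t t' : ℕ} (hj : j < n) (hj' : j' < n) :
    cell k n j t = cell k n j' t' ↔ j = j' ∧ t = t' := by
  refine ⟨fun h => ?_, by rintro ⟨rfl, rfl⟩; rfl⟩
  have h₁ := (cell_le_cell_iff hk hj hj' (t := t) (t' := t')).mp ⟨h.le.1, h.ge.2⟩
  have h₂ := (cell_le_cell_iff hk hj' hj (t := t') (t' := t)).mp ⟨h.ge.1, h.le.2⟩
  omega

theorem cell_mem_deltaSet {j t : ℕ} (hj : j < n) (ht : 1 ≤ t) (htj : t ≤ 1 + k * j) :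
    cell k n j t ∈ DeltaSet (k * n + 1) k := by
  have h := rowStart_add_mul_add (k := k) hj
  refine ⟨by simp only [cell, rowStart]; omega, by simp only [cell]; omega,
    by simp only [cell]; push_cast; omega, ?_⟩
  simp only [cell, rowStart]
  push_cast
  rw [add_comm, Int.add_mul_emod_self_left]

theorem exists_cell_eq_of_mem_deltaSet (hk : 0 < k) {p : ℤ × ℤ}
    (hp : p ∈ DeltaSet (k * n + 1) k) :
    ∃ j < n, ∃ t, 1 ≤ t ∧ t ≤ 1 + k * j ∧ cell k n j t = p := by
  obtain ⟨a, b⟩ := p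
  obtain ⟨ha, hab, hb, hmod⟩ := hp
  dsimp only at ha hab hb hmod
  lift a to ℕ using (by omega)
  lift b to ℕ using (by omega)
  push_cast at ha hab hb hmod
  have hmod' : 1 ≡ a [MOD k] := by
    simp only [Nat.ModEq]
    exact_mod_cast hmod.symm
  obtain ⟨s, hs⟩ := (Nat.modEq_iff_dvd' (by omega)).mp hmod'
  have hsn : s < n := by
    by_contra! h
    have := Nat.mul_le_mul_left k h
    omega
  have hrow : rowStart k n (n - 1 - s) = a := by
    rw [rowStart, show n - 1 - (n - 1 - s) = s by omega]
    omega
  have h := rowStart_add_mul_add (k := k) (show n - 1 - s < n by omega)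
  refine ⟨n - 1 - s, by omega, b - a, by omega, by omega, ?_⟩
  simp only [cell, hrow, Prod.mk.injEq, true_and]
  omega

theorem cell_mem_deltaSet_iff (hk : 0 < k) {j t : ℕ} (hj : j < n) :
    cell k n j t ∈ DeltaSet (k * n + 1) k ↔ 1 ≤ t ∧ t ≤ 1 + k * j := by
  refine ⟨fun h => ?_, fun h => cell_mem_deltaSet hj h.1 h.2⟩
  obtain ⟨j', hj', t', ht', htj', heq⟩ := exists_cell_eq_of_mem_deltaSet hk h
  obtain ⟨rfl, rfl⟩ := (cell_inj hk hj' hj).mp heq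
  exact ⟨ht', htj'⟩

theorem cell_mem_ofRowLengths_iff (hk : 0 < k) {e : ℕ → ℕ} {j t : ℕ} (hj : j < n) :
    cell k n j t ∈ ofRowLengths k n e ↔ 1 ≤ t ∧ t ≤ e j := by
  constructor
  · rintro ⟨j', hj', t', ht', hte, heq⟩
    obtain ⟨rfl, rfl⟩ := (cell_inj hk hj' hj).mp heq
    exact ⟨ht', hte⟩
  · rintro ⟨ht, hte⟩
    exact ⟨j, hj, t, ht, hte, rfl⟩

theorem isDeltaIdeal_ofRowLengths (hk : 0 < k) {e : ℕ → ℕ} (h0 : e 0 ≤ 1)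
    (hstep : ∀ j, e (j + 1) ≤ e j + k) : IsDeltaIdeal (k * n + 1) k (ofRowLengths k n e) := by
  constructor
  · rintro _ ⟨j, hj, t, ht, hte, rfl⟩
    have := le_add_mul_sub_of_forall_succ_le hstep (Nat.zero_le j)
    rw [Nat.sub_zero] at this
    exact cell_mem_deltaSet hj ht (by omega)
  · rintro _ ⟨j, hj, t, ht, hte, rfl⟩ q hq h₁ h₂
    obtain ⟨j', hj', t', ht', -, rfl⟩ := exists_cell_eq_of_mem_deltaSet hk hq
    obtain ⟨hjj, htt⟩ := (cell_le_cell_iff hk hj hj').mp ⟨h₁, h₂⟩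
    have := le_add_mul_sub_of_forall_succ_le hstep hjj
    exact (cell_mem_ofRowLengths_iff hk hj').mpr ⟨ht', by omega⟩

theorem ofRowLengths_congr {e e' : ℕ → ℕ} (h : ∀ j < n, e j = e' j) :
    ofRowLengths k n e = ofRowLengths k n e' := by
  ext p
  constructor <;> rintro ⟨j, hj, t, ht, hte, rfl⟩
  · exact ⟨j, hj, t, ht, h j hj ▸ hte, rfl⟩
  · exact ⟨j, hj, t, ht, (h j hj).symm ▸ hte, rfl⟩

theorem eq_of_ofRowLengths_eq (hk : 0 < k) {e e' : ℕ → ℕ}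
    (h : ofRowLengths k n e = ofRowLengths k n e') {j : ℕ} (hj : j < n) : e j = e' j := by
  have key : ∀ t, 1 ≤ t ∧ t ≤ e j ↔ 1 ≤ t ∧ t ≤ e' j := fun t => by
    rw [← cell_mem_ofRowLengths_iff hk hj, h, cell_mem_ofRowLengths_iff hk hj]
  have := key (e j)
  have := key (e' j)
  omega

variable {I : Set (ℤ × ℤ)}

theorem cell_mem_iff_le_rowLength (hk : 0 < k) (hI : IsDeltaIdeal (k * n + 1) k I) {j t : ℕ}
    (hj : j < n) : cell k n j t ∈ I ↔ 1 ≤ t ∧ t ≤ rowLength k n I j := by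
  classical
  have hrow : {t ∈ Icc 1 (1 + k * j) | cell k n j t ∈ I} = Icc 1 (rowLength k n I j) := by
    refine Finset.eq_Icc_one_card (fun t ht => (mem_Icc.mp (mem_filter.mp ht).1).1) ?_
    intro t ht t' ht' htt'
    simp only [mem_filter, mem_Icc] at ht ⊢
    have hle := (cell_le_cell_iff hk hj hj (t := t) (t' := t')).mpr ⟨le_rfl, by simpa⟩
    exact ⟨⟨ht', by omega⟩, hI.2 _ ht.2 _ (cell_mem_deltaSet hj ht' (by omega)) hle.1 hle.2⟩
  rw [← mem_Icc, ← hrow, mem_filter, mem_Icc, and_iff_right_of_imp]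
  exact fun h => (cell_mem_deltaSet_iff hk hj).mp (hI.1 h)

theorem rowLength_le (j : ℕ) : rowLength k n I j ≤ 1 + k * j := by
  classical
  simpa [rowLength] using card_filter_le (Icc 1 (1 + k * j)) (cell k n j · ∈ I)

theorem rowLength_succ_le (hk : 0 < k) (hI : IsDeltaIdeal (k * n + 1) k I) {j : ℕ}
    (hj : j + 1 < n) : rowLength k n I (j + 1) ≤ rowLength k n I j + k := by
  by_contra! hlt
  set t := rowLength k n I (j + 1)
  have htop : cell k n (j + 1) t ∈ I :=
    (cell_mem_iff_le_rowLength hk hI hj).mpr ⟨by omega, le_rfl⟩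
  have ht : t ≤ 1 + k * j + k := by
    simpa only [mul_add, mul_one, add_assoc] using rowLength_le (k := k) (n := n) (I := I) (j + 1)
  -- `cell k n j (t - k)` has the same right end as `htop` and a larger left end
  have hle := (cell_le_cell_iff hk hj (j' := j) (t := t) (t' := t - k) (by omega)).mpr
    ⟨by omega, by simp only [Nat.add_sub_cancel_left, mul_one]; omega⟩
  have hmem : cell k n j (t - k) ∈ DeltaSet (k * n + 1) k :=
    cell_mem_deltaSet (by omega) (by omega) (by omega)
  have := ((cell_mem_iff_le_rowLength hk hI (by omega)).mp (hI.2 _ htop _ hmem hle.1 hle.2)).2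
  omega

theorem ofRowLengths_rowLength (hk : 0 < k) (hI : IsDeltaIdeal (k * n + 1) k I) :
    ofRowLengths k n (rowLength k n I) = I := by
  ext p
  constructor
  · rintro ⟨j, hj, t, ht, hte, rfl⟩
    exact (cell_mem_iff_le_rowLength hk hI hj).mpr ⟨ht, hte⟩
  · intro hp
    obtain ⟨j, hj, t, -, -, rfl⟩ := exists_cell_eq_of_mem_deltaSet hk (hI.1 hp)
    obtain ⟨ht, hte⟩ := (cell_mem_iff_le_rowLength hk hI hj).mp hp
    exact ⟨j, hj, t, ht, hte, rfl⟩

theorem eq_of_ofRowLengths_getD_eq (hk : 0 < k) {l l' : List ℕ} (hl : l.length = n)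
    (hl' : l'.length = n) (h : ofRowLengths k n (l.getD · 0) = ofRowLengths k n (l'.getD · 0)) :
    l = l' := by
  refine List.ext_getElem (hl.trans hl'.symm) fun j hj hj' => ?_
  have := eq_of_ofRowLengths_eq hk h (j := j) (hl ▸ hj)
  rwa [List.getD_eq_getElem _ _ hj, List.getD_eq_getElem _ _ hj'] at this

theorem exists_mem_stepLists_ofRowLengths_eq (hk : 0 < k) (hI : IsDeltaIdeal (k * n + 1) k I) :
    ∃ l ∈ stepLists k n 1, ofRowLengths k n (l.getD · 0) = I := by
  refine ⟨(List.range n).map (rowLength k n I), mem_stepLists_iff.mpr ⟨by simp, ?_, ?_⟩, ?_⟩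
  · rw [getD_map_range]
    split_ifs
    · simpa using rowLength_le (k := k) (n := n) (I := I) 0
    · omega
  · intro j
    rw [getD_map_range, getD_map_range]
    split_ifs <;> first | omega | exact rowLength_succ_le hk hI (by omega)
  · refine (ofRowLengths_congr fun j hj => ?_).trans (ofRowLengths_rowLength hk hI)
    rw [getD_map_range, if_pos hj]

theorem card_isDeltaIdeal (hk : 0 < k) :
    Nat.card {I // IsDeltaIdeal (k * n + 1) k I} = #(stepLists k n 1) := by
  let toIdeal (l : {l // l ∈ stepLists k n 1}) : {I // IsDeltaIdeal (k * n + 1) k I} :=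
    ⟨ofRowLengths k n (l.1.getD · 0), isDeltaIdeal_ofRowLengths hk
      (mem_stepLists_iff.mp l.2).2.1 (mem_stepLists_iff.mp l.2).2.2⟩
  have hbij : Function.Bijective toIdeal := by
    refine ⟨fun ⟨l, hl⟩ ⟨l', hl'⟩ h => Subtype.ext ?_, fun ⟨I, hI⟩ => ?_⟩
    · exact eq_of_ofRowLengths_getD_eq hk (mem_stepLists_iff.mp hl).1
        (mem_stepLists_iff.mp hl').1 (congrArg Subtype.val h)
    · obtain ⟨l, hl, rfl⟩ := exists_mem_stepLists_ofRowLengths_eq hk hI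
      exact ⟨⟨l, hl⟩, rfl⟩
  rw [← Nat.card_eq_of_bijective toIdeal hbij, Nat.card_eq_finsetCard]

end RowLengths

theorem card_nonnesting_general (k n : ℕ) (hk : 1 ≤ k)
    (N : ℕ) (hN : N = k * n + 1) :
    (N + 1) * Nat.card {I : Set (ℤ × ℤ) // I ⊆ DeltaSet N k ∧
        ∀ p ∈ I, ∀ q ∈ DeltaSet N k, p.1 ≤ q.1 → q.2 ≤ p.2 → q ∈ I} =
      2 * (N + n).choose n := by
  subst hN
  have hcount := mul_card_stepLists k n 1
  rw [show (k + 1) * n + 1 = k * n + 1 + n by ring, ← card_isDeltaIdeal hk] at hcount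
  exact hcount

/-- Theorem 6.1: the number of order ideals of `Δ_{N;k}` (the `k`-indivisible
nonnesting partitions) is `(2/(N+1)) C(N+n, n)`.  Recall `(a,b) ⪯ (c,d)` iff
`a ≥ c` and `b ≤ d`. -/
theorem card_nonnesting (k n : ℕ) (hk : 1 ≤ k) (hn : 1 ≤ n)
    (N : ℕ) (hN : N = k * n + 1) :
    (N + 1) * Nat.card {I : Set (ℤ × ℤ) // I ⊆ DeltaSet N k ∧
        ∀ p ∈ I, ∀ q ∈ DeltaSet N k, p.1 ≤ q.1 → q.2 ≤ p.2 → q ∈ I} =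
      2 * (N + n).choose n :=
  card_nonnesting_general k n hk N hN
end

section
/- For all integers n > 2 and k ≥ 1, the following identity of rational numbers holds: Ran(n, k+1, 2) = Σ_{i=1}^{n−1} (−1)^{i+1} · binomial((n−i)k+2, i) · Ran(n−i, k+1, 2). -/
/-!
With `B_p = 1 + z B_p^p`, the generating function of the Fuss–Catalan numbers, one has
`Ran(n, p, r) = [z^n] B_p^r`. Since `B_(k+1)(z(1-z)^k) = 1/(1-z)`, substituting `z(1-z)^k` for `z`
gives `∑_m Ran(m, k+1, r) z^m (1-z)^(mk+r) = 1`, so for `n ≥ 1` the coefficient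
`∑_i (-1)^i C((n-i)k+r, i) Ran(n-i, k+1, r)` of `z^n` vanishes; for `n > r` its term `i = n` is
`± C(r, n) = 0`. The vanishing is proved without power series, by induction on `n` and `r`, from
Pascal's rule and its Raney analogue `Ran(n+1, p, r+1) = Ran(n+1, p, r) + Ran(n, p, p+r)`.
-/

/-- the Raney number `Ran(n, p, r) = (r/(np+r)) C(np+r, n)`, as a rational number. -/
def Ran (n p r : ℕ) : ℚ :=
  (r : ℚ) / ((n : ℚ) * p + r) * (((n * p + r).choose n : ℕ) : ℚ)

open Finset

theorem ran_zero_left (p : ℕ) {r : ℕ} (hr : r ≠ 0) : Ran 0 p r = 1 := by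
  simp [Ran, hr]

theorem ran_zero_right (n p : ℕ) : Ran n p 0 = 0 := by
  simp [Ran]

theorem ran_succ_succ (n : ℕ) {p : ℕ} (hp : 0 < p) (r : ℕ) :
    Ran (n + 1) p (r + 1) = Ran (n + 1) p r + Ran n p (p + r) := by
  set N := (n + 1) * p + r with hN
  have hnN : n ≤ N := by nlinarith
  have hN0 : (N : ℚ) ≠ 0 := by positivity
  have hchoose : (N.choose (n + 1) : ℚ) = N.choose n * (N - n) / (n + 1) := by
    rw [eq_div_iff (by positivity), ← Nat.cast_sub hnN]
    exact_mod_cast Nat.choose_succ_right_eq N n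
  have hchoose_succ : ((N + 1).choose (n + 1) : ℚ) = (N + 1) * N.choose n / (n + 1) := by
    rw [eq_div_iff (by positivity)]
    exact_mod_cast (Nat.add_one_mul_choose_eq N n).symm
  have hNq : (N : ℚ) = (n + 1) * p + r := by simp [hN]
  unfold Ran
  rw [show n * p + (p + r) = N by ring, show (n + 1) * p + (r + 1) = N + 1 by ring, ← hN]
  push_cast
  rw [hchoose, hchoose_succ, ← hNq, show (n : ℚ) * p + (p + r) = N by rw [hNq]; ring,
    show ((n : ℚ) + 1) * p + (r + 1) = N + 1 by rw [hNq]; ring]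
  field_simp
  linear_combination (N.choose n : ℚ) * hNq

/-- `[z^n] B_p(z)^r` for all `r`: the closed form `Ran 0 p 0` is `0 / 0 = 0` instead of `1`. -/
def raney (n p r : ℕ) : ℚ := if n = 0 then 1 else Ran n p r

@[simp] theorem raney_zero_left (p r : ℕ) : raney 0 p r = 1 := rfl

theorem raney_succ_zero_right (n p : ℕ) : raney (n + 1) p 0 = 0 := ran_zero_right _ _

theorem raney_eq_ran (n p : ℕ) {r : ℕ} (hr : r ≠ 0) : raney n p r = Ran n p r := by
  unfold raney
  split_ifs with hn
  · rw [hn, ran_zero_left p hr]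
  · rfl

theorem raney_succ_succ (n : ℕ) {p : ℕ} (hp : 0 < p) (r : ℕ) :
    raney (n + 1) p (r + 1) = raney (n + 1) p r + raney n p (p + r) := by
  rw [raney_eq_ran n p (by omega)]
  exact ran_succ_succ n hp r

def raneyAltSum (k n r : ℕ) : ℚ :=
  ∑ x ∈ antidiagonal n, (-1) ^ x.1 * ((x.2 * k + r).choose x.1 : ℚ) * raney x.2 (k + 1) r

theorem raneyAltSum_zero (k r : ℕ) : raneyAltSum k 0 r = 1 := by
  simp [raneyAltSum]

theorem raneyAltSum_succ_zero (k n : ℕ) : raneyAltSum k (n + 1) 0 = 0 := by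
  simp [raneyAltSum, Nat.sum_antidiagonal_succ', raney_succ_zero_right]

theorem raneyAltSum_succ_succ (k n r : ℕ) :
    raneyAltSum k (n + 1) (r + 1) =
      raneyAltSum k (n + 1) r - raneyAltSum k n r + raneyAltSum k n (k + 1 + r) := by
  have hsplit : raneyAltSum k (n + 1) (r + 1) =
      (∑ x ∈ antidiagonal (n + 1),
          (-1) ^ x.1 * ((x.2 * k + r + 1).choose x.1 : ℚ) * raney x.2 (k + 1) r)
        + raneyAltSum k n (k + 1 + r) := by
    rw [raneyAltSum, raneyAltSum, Nat.sum_antidiagonal_succ', Nat.sum_antidiagonal_succ',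
      add_assoc, ← sum_add_distrib]
    congr 1
    refine sum_congr rfl fun x _ => ?_
    dsimp only
    rw [raney_succ_succ (p := k + 1) _ (by omega),
      show (x.2 + 1) * k + (r + 1) = x.2 * k + (k + 1 + r) by ring,
      show (x.2 + 1) * k + r + 1 = x.2 * k + (k + 1 + r) by ring]
    ring
  have hpascal : (∑ x ∈ antidiagonal (n + 1),
        (-1) ^ x.1 * ((x.2 * k + r + 1).choose x.1 : ℚ) * raney x.2 (k + 1) r)
      = raneyAltSum k (n + 1) r - raneyAltSum k n r := by
    rw [raneyAltSum, raneyAltSum, Nat.sum_antidiagonal_succ, Nat.sum_antidiagonal_succ,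
      add_sub_assoc, ← sum_sub_distrib]
    congr 1
    · simp
    · refine sum_congr rfl fun x _ => ?_
      rw [Nat.choose_succ_succ']
      push_cast
      ring
  rw [hsplit, hpascal]

theorem raneyAltSum_succ_eq_zero (k n r : ℕ) : raneyAltSum k (n + 1) r = 0 := by
  induction n generalizing r with
  | zero =>
    induction r with
    | zero => exact raneyAltSum_succ_zero k 0
    | succ r ih => rw [raneyAltSum_succ_succ, ih, raneyAltSum_zero, raneyAltSum_zero]; ring
  | succ n ihn =>
    induction r with
    | zero => exact raneyAltSum_succ_zero k (n + 1)
    | succ r ih => rw [raneyAltSum_succ_succ, ih, ihn, ihn]; ring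

theorem ran_eq_alternating_sum (k : ℕ) {n r : ℕ} (hr : r ≠ 0) (hrn : r < n) :
    Ran n (k + 1) r =
      ∑ i ∈ Icc 1 (n - 1),
        (-1 : ℚ) ^ (i + 1) * (((n - i) * k + r).choose i : ℕ) * Ran (n - i) (k + 1) r := by
  obtain ⟨m, rfl⟩ : ∃ m, n = m + 1 := ⟨n - 1, by omega⟩
  have h := raneyAltSum_succ_eq_zero k m r
  rw [raneyAltSum, Nat.sum_antidiagonal_eq_sum_range_succ
      (fun i j => (-1 : ℚ) ^ i * ((j * k + r).choose i : ℚ) * raney j (k + 1) r),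
    sum_range_succ, sum_range_eq_add_Ico _ (by omega)] at h
  have hIcc : Icc 1 (m + 1 - 1) = Ico 1 (m + 1) := by ext; simp only [mem_Icc, mem_Ico]; omega
  simp only [Nat.sub_self, tsub_zero, zero_mul, zero_add, Nat.choose_eq_zero_of_lt hrn,
    Nat.choose_zero_right, raney_eq_ran _ _ hr, pow_zero, Nat.cast_zero, Nat.cast_one, one_mul,
    mul_zero, add_zero] at h
  rw [hIcc]
  simp only [pow_succ, mul_neg_one, neg_mul, sum_neg_distrib]
  exact eq_neg_of_add_eq_zero_left h

theorem raney_recursion_general (n k : ℕ) (hn : 2 < n) :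
    Ran n (k + 1) 2 =
      ∑ i ∈ Finset.Icc 1 (n - 1),
        (-1 : ℚ) ^ (i + 1) * (((n - i) * k + 2).choose i : ℕ) * Ran (n - i) (k + 1) 2 :=
  ran_eq_alternating_sum k two_ne_zero hn

/-- Corollary 6.2: for `n > 2` and `k ≥ 1`,
`Ran(n, k+1, 2) = Σ_{i=1}^{n-1} (-1)^(i+1) C((n-i)k+2, i) Ran(n-i, k+1, 2)`. -/
theorem raney_recursion (n k : ℕ) (hn : 2 < n) (hk : 1 ≤ k) :
    Ran n (k + 1) 2 =
      ∑ i ∈ Finset.Icc 1 (n - 1),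
        (-1 : ℚ) ^ (i + 1) * (((n - i) * k + 2).choose i : ℕ) * Ran (n - i) (k + 1) 2 :=
  raney_recursion_general n k hn
end
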